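/- arXiv:1606.02027 — 2 statements merged into one kernel-verified Lean document; each statement's English description precedes it below -/
import Mathlib

section
/- Let H be a finite-dimensional complex Hilbert space with dim H ≥ 1, let Φ = (φ_1, …, φ_N) be a frame for H consisting of unit vectors (‖φ_i‖ = 1 for all i), and let Ψ = (ψ_1, …, ψ_N) be a μ-perturbation of Φ with ‖ψ_i‖ = 1 for all i and 0 < μ < √(R_Φ^−). Then Ψ is a frame for H and its lower redundancy satisfies R_Ψ^− ≥ R_Φ^−·(1 − μ/√(R_Φ^−))² = (√(R_Φ^−) − μ)². -/
open scoped ComplexInnerProductSpace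

/-!
The perturbation bound says the synthesis operator `c ↦ ∑ i, c i • (φ i - ψ i)` has norm at most
`μ`; hence so does its adjoint, the analysis operator `x ↦ (⟪x, φ i - ψ i⟫)ᵢ`. Writing
`S_Φ(x) = ∑ i, ‖⟪x, φ i⟫‖ ^ 2`, the triangle inequality in `ℓ²` gives
`√S_Ψ(x) ≥ √S_Φ(x) - μ‖x‖ ≥ (√R_Φ⁻ - μ)‖x‖`, which is the lower frame bound for `Ψ` and, on the
unit sphere, the estimate on `R_Ψ⁻`. The upper frame bound holds for every finite family by
Cauchy–Schwarz.
-/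

section FrameInequalities

variable {H : Type*} [NormedAddCommGroup H] [InnerProductSpace ℂ H] {ι : Type*} [Fintype ι]

/-- Test the bound on `c i = conj ⟪x, θ i⟫`, for which `⟪x, ∑ i, c i • θ i⟫ = ∑ i, ‖⟪x, θ i⟫‖ ^ 2`. -/
theorem sqrt_sum_norm_inner_sq_le_of_norm_sum_smul_le {θ : ι → H} {μ : ℝ} (hμ : 0 ≤ μ)
    (hθ : ∀ c : ι → ℂ, ‖∑ i, c i • θ i‖ ≤ μ * √(∑ i, ‖c i‖ ^ 2)) (x : H) :
    √(∑ i, ‖⟪x, θ i⟫‖ ^ 2) ≤ μ * ‖x‖ := by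
  set S := ∑ i, ‖⟪x, θ i⟫‖ ^ 2
  have hS : 0 ≤ S := by positivity
  have hinner : ⟪x, ∑ i, starRingEnd ℂ ⟪x, θ i⟫ • θ i⟫ = S := by
    simp_rw [inner_sum, inner_smul_right, mul_comm _ ⟪x, _⟫, Complex.mul_conj']
    push_cast [S]
    rfl
  have hsynth := hθ fun i => starRingEnd ℂ ⟪x, θ i⟫
  simp only [Complex.norm_conj] at hsynth
  have hSle : √S * √S ≤ μ * ‖x‖ * √S := by
    calc √S * √S = ‖⟪x, ∑ i, starRingEnd ℂ ⟪x, θ i⟫ • θ i⟫‖ := by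
          rw [hinner, Complex.norm_real, Real.norm_of_nonneg hS, Real.mul_self_sqrt hS]
      _ ≤ ‖x‖ * (μ * √S) :=
        (norm_inner_le_norm _ _).trans (mul_le_mul_of_nonneg_left hsynth (norm_nonneg x))
      _ = μ * ‖x‖ * √S := by ring
  rcases (Real.sqrt_nonneg S).eq_or_lt with h0 | hpos
  · rw [← h0]; positivity
  · exact le_of_mul_le_mul_right hSle hpos

theorem sqrt_sum_norm_inner_sq_le_add {φ ψ : ι → H} {μ : ℝ} (hμ : 0 ≤ μ)
    (hpert : ∀ c : ι → ℂ, ‖∑ i, c i • (φ i - ψ i)‖ ≤ μ * √(∑ i, ‖c i‖ ^ 2)) (x : H) :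
    √(∑ i, ‖⟪x, φ i⟫‖ ^ 2) ≤ √(∑ i, ‖⟪x, ψ i⟫‖ ^ 2) + μ * ‖x‖ := by
  let coeffs : (ι → H) → EuclideanSpace ℂ ι := fun θ => WithLp.toLp 2 fun i => ⟪x, θ i⟫
  have hnorm (θ : ι → H) : ‖coeffs θ‖ = √(∑ i, ‖⟪x, θ i⟫‖ ^ 2) := EuclideanSpace.norm_eq _
  have hsub : coeffs φ - coeffs ψ = coeffs fun i => φ i - ψ i := by
    ext i; simp [coeffs]
  have := norm_sub_norm_le (coeffs φ) (coeffs ψ)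
  rw [hsub, hnorm, hnorm, hnorm] at this
  linarith [sqrt_sum_norm_inner_sq_le_of_norm_sum_smul_le hμ hpert x]

theorem sum_norm_inner_sq_le (ψ : ι → H) (x : H) :
    ∑ i, ‖⟪x, ψ i⟫‖ ^ 2 ≤ (∑ i, ‖ψ i‖ ^ 2) * ‖x‖ ^ 2 := by
  rw [Finset.sum_mul]
  gcongr with i
  rw [← mul_pow, mul_comm]
  gcongr
  exact norm_inner_le_norm x (ψ i)

theorem iInf_sphere_sum_norm_inner_sq_mul_le (φ : ι → H) (x : H) :
    (⨅ u : {u : H // ‖u‖ = 1}, ∑ i, ‖⟪(u : H), φ i⟫‖ ^ 2) * ‖x‖ ^ 2 ≤ ∑ i, ‖⟪x, φ i⟫‖ ^ 2 := by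
  rcases eq_or_ne x 0 with rfl | hx
  · simp
  have hx' : ‖x‖ ≠ 0 := norm_ne_zero_iff.mpr hx
  let u : {u : H // ‖u‖ = 1} := ⟨(‖x‖⁻¹ : ℂ) • x, by simp [norm_smul, hx']⟩
  have hu : ∑ i, ‖⟪(u : H), φ i⟫‖ ^ 2 = (∑ i, ‖⟪x, φ i⟫‖ ^ 2) / ‖x‖ ^ 2 := by
    rw [div_eq_mul_inv, Finset.sum_mul]
    simp [u, mul_pow]
  have hbdd : BddBelow (Set.range fun u : {u : H // ‖u‖ = 1} => ∑ i, ‖⟪(u : H), φ i⟫‖ ^ 2) :=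
    ⟨0, by rintro _ ⟨u, rfl⟩; positivity⟩
  calc _ ≤ (∑ i, ‖⟪(u : H), φ i⟫‖ ^ 2) * ‖x‖ ^ 2 := by gcongr; exact ciInf_le hbdd u
    _ = _ := by rw [hu]; field_simp

end FrameInequalities

theorem mul_one_sub_div_sqrt_sq {R : ℝ} (hR : 0 < R) (μ : ℝ) :
    R * (1 - μ / √R) ^ 2 = (√R - μ) ^ 2 := by
  have hs : √R ^ 2 = R := Real.sq_sqrt hR.le
  have : √R ≠ 0 := (Real.sqrt_pos.mpr hR).ne'
  field_simp
  rw [hs]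

theorem lower_redundancy_of_perturbed_frame_general
    {H : Type*} [NormedAddCommGroup H] [InnerProductSpace ℂ H]
    {N : ℕ} (φ ψ : Fin N → H) (μ : ℝ)
    (hμ : 0 < μ)
    (hμR : μ < Real.sqrt (⨅ x : {x : H // ‖x‖ = 1}, ∑ i, ‖⟪(x : H), φ i⟫‖ ^ 2))
    (hpert : ∀ c : Fin N → ℂ,
      ‖∑ i, c i • (φ i - ψ i)‖ ≤ μ * Real.sqrt (∑ i, ‖c i‖ ^ 2)) :
    (∃ A B : ℝ, 0 < A ∧ A ≤ B ∧ ∀ x : H,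
      A * ‖x‖ ^ 2 ≤ ∑ i, ‖⟪x, ψ i⟫‖ ^ 2 ∧ ∑ i, ‖⟪x, ψ i⟫‖ ^ 2 ≤ B * ‖x‖ ^ 2) ∧
    (⨅ x : {x : H // ‖x‖ = 1}, ∑ i, ‖⟪(x : H), φ i⟫‖ ^ 2) *
        (1 - μ / Real.sqrt (⨅ x : {x : H // ‖x‖ = 1}, ∑ i, ‖⟪(x : H), φ i⟫‖ ^ 2)) ^ 2 ≤
      (⨅ x : {x : H // ‖x‖ = 1}, ∑ i, ‖⟪(x : H), ψ i⟫‖ ^ 2) ∧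
    (⨅ x : {x : H // ‖x‖ = 1}, ∑ i, ‖⟪(x : H), φ i⟫‖ ^ 2) *
        (1 - μ / Real.sqrt (⨅ x : {x : H // ‖x‖ = 1}, ∑ i, ‖⟪(x : H), φ i⟫‖ ^ 2)) ^ 2 =
      (Real.sqrt (⨅ x : {x : H // ‖x‖ = 1}, ∑ i, ‖⟪(x : H), φ i⟫‖ ^ 2) - μ) ^ 2 := by
  set R := ⨅ x : {x : H // ‖x‖ = 1}, ∑ i, ‖⟪(x : H), φ i⟫‖ ^ 2
  have hR : 0 < R := Real.sqrt_pos.mp (hμ.trans hμR)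
  have hgap : 0 < √R - μ := sub_pos.mpr hμR
  have hlower (x : H) : (√R - μ) ^ 2 * ‖x‖ ^ 2 ≤ ∑ i, ‖⟪x, ψ i⟫‖ ^ 2 := by
    have hφx : √R * ‖x‖ ≤ √(∑ i, ‖⟪x, φ i⟫‖ ^ 2) := by
      simpa [Real.sqrt_mul hR.le] using
        Real.sqrt_le_sqrt (iInf_sphere_sum_norm_inner_sq_mul_le φ x)
    have hψx := sqrt_sum_norm_inner_sq_le_add hμ.le hpert x
    calc (√R - μ) ^ 2 * ‖x‖ ^ 2 = ((√R - μ) * ‖x‖) ^ 2 := by ring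
      _ ≤ √(∑ i, ‖⟪x, ψ i⟫‖ ^ 2) ^ 2 := by
        gcongr
        linarith [sub_mul √R μ ‖x‖]
      _ = ∑ i, ‖⟪x, ψ i⟫‖ ^ 2 := Real.sq_sqrt (by positivity)
  -- an empty unit sphere would force `R = 0`
  have : Nonempty {x : H // ‖x‖ = 1} := by
    by_contra h
    exact hR.ne' (@Real.iInf_of_isEmpty _ (not_nonempty_iff.mp h) _)
  refine ⟨⟨(√R - μ) ^ 2, max ((√R - μ) ^ 2) (∑ i, ‖ψ i‖ ^ 2), by positivity,
    le_max_left _ _, fun x => ⟨hlower x, ?_⟩⟩, ?_, mul_one_sub_div_sqrt_sq hR μ⟩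
  · exact (sum_norm_inner_sq_le ψ x).trans (by gcongr; exact le_max_right _ _)
  · rw [mul_one_sub_div_sqrt_sq hR μ]
    exact le_ciInf fun x => by simpa [x.2] using hlower x

/-- If `Φ` is a unit-norm frame for a finite-dimensional complex
Hilbert space `H` (`dim H ≥ 1`) and `Ψ` is a unit-norm `μ`-perturbation of `Φ`
with `0 < μ < √(R_Φ⁻)`, then `Ψ` is a frame for `H` and
`R_Ψ⁻ ≥ R_Φ⁻ (1 - μ/√(R_Φ⁻))² = (√(R_Φ⁻) - μ)²`. -/
theorem lower_redundancy_of_perturbed_frame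
    {H : Type*} [NormedAddCommGroup H] [InnerProductSpace ℂ H] [FiniteDimensional ℂ H]
    (hdim : 1 ≤ Module.finrank ℂ H)
    {N : ℕ} (φ ψ : Fin N → H) (μ : ℝ)
    (hframe : ∃ A B : ℝ, 0 < A ∧ A ≤ B ∧ ∀ x : H,
      A * ‖x‖ ^ 2 ≤ ∑ i, ‖⟪x, φ i⟫‖ ^ 2 ∧ ∑ i, ‖⟪x, φ i⟫‖ ^ 2 ≤ B * ‖x‖ ^ 2)
    (hφ : ∀ i, ‖φ i‖ = 1) (hψ : ∀ i, ‖ψ i‖ = 1)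
    (hμ : 0 < μ)
    (hμR : μ < Real.sqrt (⨅ x : {x : H // ‖x‖ = 1}, ∑ i, ‖⟪(x : H), φ i⟫‖ ^ 2))
    (hpert : ∀ c : Fin N → ℂ,
      ‖∑ i, c i • (φ i - ψ i)‖ ≤ μ * Real.sqrt (∑ i, ‖c i‖ ^ 2)) :
    (∃ A B : ℝ, 0 < A ∧ A ≤ B ∧ ∀ x : H,
      A * ‖x‖ ^ 2 ≤ ∑ i, ‖⟪x, ψ i⟫‖ ^ 2 ∧ ∑ i, ‖⟪x, ψ i⟫‖ ^ 2 ≤ B * ‖x‖ ^ 2) ∧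
    (⨅ x : {x : H // ‖x‖ = 1}, ∑ i, ‖⟪(x : H), φ i⟫‖ ^ 2) *
        (1 - μ / Real.sqrt (⨅ x : {x : H // ‖x‖ = 1}, ∑ i, ‖⟪(x : H), φ i⟫‖ ^ 2)) ^ 2 ≤
      (⨅ x : {x : H // ‖x‖ = 1}, ∑ i, ‖⟪(x : H), ψ i⟫‖ ^ 2) ∧
    (⨅ x : {x : H // ‖x‖ = 1}, ∑ i, ‖⟪(x : H), φ i⟫‖ ^ 2) *
        (1 - μ / Real.sqrt (⨅ x : {x : H // ‖x‖ = 1}, ∑ i, ‖⟪(x : H), φ i⟫‖ ^ 2)) ^ 2 =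
      (Real.sqrt (⨅ x : {x : H // ‖x‖ = 1}, ∑ i, ‖⟪(x : H), φ i⟫‖ ^ 2) - μ) ^ 2 :=
  lower_redundancy_of_perturbed_frame_general φ ψ μ hμ hμR hpert
end

section
/- Let H be a finite-dimensional complex Hilbert space with dim H ≥ 1, let Φ = (φ_1, …, φ_N) be a frame for H consisting of unit vectors (‖φ_i‖ = 1 for all i), and let Ψ = (ψ_1, …, ψ_N) be a μ-perturbation of Φ with ‖ψ_i‖ = 1 for all i and μ > 0. Then the upper redundancy of Ψ satisfies R_Ψ^+ ≤ R_Φ^+·(1 + μ/√(R_Φ^+))² = (√(R_Φ^+) + μ)². -/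
open scoped ComplexInnerProductSpace InnerProductSpace

/-!
The analysis operator `x ↦ (⟪x, φ i⟫)ᵢ ∈ ℓ²` has squared norm `R_Φ(x)` on the unit sphere. The
perturbation hypothesis bounds the synthesis operator of `Φ - Ψ` by `μ`, hence also its adjoint,
the analysis operator of `Φ - Ψ`. By the triangle inequality in `ℓ²`,
`√R_Ψ(x) ≤ √R_Φ(x) + μ ≤ √R_Φ⁺ + μ` for every unit vector `x`.
-/

section Redundancy

variable {𝕜 E ι : Type*} [RCLike 𝕜] [NormedAddCommGroup E] [InnerProductSpace 𝕜 E]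

variable (𝕜) in
noncomputable def analysisOp (φ : ι → E) (x : E) : EuclideanSpace 𝕜 ι :=
  WithLp.toLp 2 fun i => ⟪x, φ i⟫_𝕜

theorem analysisOp_sub (φ ψ : ι → E) (x : E) :
    analysisOp 𝕜 φ x - analysisOp 𝕜 ψ x = analysisOp 𝕜 (fun i => φ i - ψ i) x := by
  ext i
  simp [analysisOp, inner_sub_right]

variable [Fintype ι]

variable (𝕜) in
noncomputable def upperRedundancy (φ : ι → E) : ℝ :=
  ⨆ x : {x : E // ‖x‖ = 1}, ∑ i, ‖⟪(x : E), φ i⟫_𝕜‖ ^ 2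

theorem norm_analysisOp_sq (φ : ι → E) (x : E) :
    ‖analysisOp 𝕜 φ x‖ ^ 2 = ∑ i, ‖⟪x, φ i⟫_𝕜‖ ^ 2 :=
  EuclideanSpace.norm_sq_eq _

theorem norm_analysisOp_le {d : ι → E} {μ : ℝ} (hμ : 0 ≤ μ)
    (hd : ∀ c : ι → 𝕜, ‖∑ i, c i • d i‖ ≤ μ * √(∑ i, ‖c i‖ ^ 2)) (x : E) :
    ‖analysisOp 𝕜 d x‖ ≤ μ * ‖x‖ := by
  set v := analysisOp 𝕜 d x
  have hinner : ⟪x, ∑ i, (starRingEnd 𝕜) (v i) • d i⟫_𝕜 = ((‖v‖ ^ 2 : ℝ) : 𝕜) := by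
    simp only [inner_sum, inner_smul_right, EuclideanSpace.norm_sq_eq, v, analysisOp,
      PiLp.toLp_apply, RCLike.conj_mul]
    push_cast
    rfl
  have hsq : ‖v‖ ^ 2 ≤ ‖x‖ * (μ * ‖v‖) := by
    have hcs := norm_inner_le_norm (𝕜 := 𝕜) x (∑ i, (starRingEnd 𝕜) (v i) • d i)
    have hsyn := hd fun i => (starRingEnd 𝕜) (v i)
    simp only [RCLike.norm_conj, ← EuclideanSpace.norm_sq_eq, Real.sqrt_sq (norm_nonneg v)]
      at hsyn
    rw [hinner, RCLike.norm_ofReal, abs_of_nonneg (by positivity)] at hcs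
    exact hcs.trans (mul_le_mul_of_nonneg_left hsyn (norm_nonneg x))
  rcases (norm_nonneg v).eq_or_lt with hv | hv
  · rw [← hv]
    positivity
  · nlinarith

theorem norm_analysisOp_le_add {φ ψ : ι → E} {μ : ℝ} (hμ : 0 ≤ μ)
    (hpert : ∀ c : ι → 𝕜, ‖∑ i, c i • (φ i - ψ i)‖ ≤ μ * √(∑ i, ‖c i‖ ^ 2)) (x : E) :
    ‖analysisOp 𝕜 ψ x‖ ≤ ‖analysisOp 𝕜 φ x‖ + μ * ‖x‖ := by
  calc ‖analysisOp 𝕜 ψ x‖ ≤ ‖analysisOp 𝕜 φ x‖ + ‖analysisOp 𝕜 φ x - analysisOp 𝕜 ψ x‖ := by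
        rw [norm_sub_rev]
        exact norm_le_norm_add_norm_sub' _ _
    _ ≤ ‖analysisOp 𝕜 φ x‖ + μ * ‖x‖ := by
        rw [analysisOp_sub]
        gcongr
        exact norm_analysisOp_le hμ hpert x

theorem bddAbove_redundancy (φ : ι → E) :
    BddAbove (Set.range fun x : {x : E // ‖x‖ = 1} => ∑ i, ‖⟪(x : E), φ i⟫_𝕜‖ ^ 2) := by
  refine ⟨∑ i, ‖φ i‖ ^ 2, ?_⟩
  rintro _ ⟨⟨x, hx⟩, rfl⟩
  refine Finset.sum_le_sum fun i _ => pow_le_pow_left₀ (norm_nonneg _) ?_ 2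
  simpa [hx] using norm_inner_le_norm (𝕜 := 𝕜) x (φ i)

theorem sum_le_upperRedundancy (φ : ι → E) {x : E} (hx : ‖x‖ = 1) :
    ∑ i, ‖⟪x, φ i⟫_𝕜‖ ^ 2 ≤ upperRedundancy 𝕜 φ :=
  le_ciSup (bddAbove_redundancy φ) (⟨x, hx⟩ : {x : E // ‖x‖ = 1})

theorem le_upperRedundancy [Nontrivial E] {φ : ι → E} {A : ℝ}
    (hA : ∀ x : E, A * ‖x‖ ^ 2 ≤ ∑ i, ‖⟪x, φ i⟫_𝕜‖ ^ 2) :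
    A ≤ upperRedundancy 𝕜 φ := by
  obtain ⟨y, hy⟩ := exists_ne (0 : E)
  have hx := norm_smul_inv_norm (𝕜 := 𝕜) hy
  simpa [hx] using (hA _).trans (sum_le_upperRedundancy φ hx)

theorem upperRedundancy_le_sqrt_add_sq {φ ψ : ι → E} {μ : ℝ} (hμ : 0 ≤ μ)
    (hpert : ∀ c : ι → 𝕜, ‖∑ i, c i • (φ i - ψ i)‖ ≤ μ * √(∑ i, ‖c i‖ ^ 2)) :
    upperRedundancy 𝕜 ψ ≤ (√(upperRedundancy 𝕜 φ) + μ) ^ 2 := by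
  refine Real.iSup_le (fun ⟨x, hx⟩ => ?_) (sq_nonneg _)
  have hφx : ‖analysisOp 𝕜 φ x‖ ≤ √(upperRedundancy 𝕜 φ) := by
    rw [← Real.sqrt_sq (norm_nonneg _), norm_analysisOp_sq]
    exact Real.sqrt_le_sqrt (sum_le_upperRedundancy φ hx)
  rw [← norm_analysisOp_sq]
  have hψx := norm_analysisOp_le_add hμ hpert x
  rw [hx, mul_one] at hψx
  exact pow_le_pow_left₀ (norm_nonneg _) (hψx.trans (by linarith)) 2

end Redundancy

theorem mul_one_add_div_sqrt_sq {S : ℝ} (hS : 0 < S) (μ : ℝ) :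
    S * (1 + μ / √S) ^ 2 = (√S + μ) ^ 2 := by
  have hsqrt : √S ≠ 0 := (Real.sqrt_pos.mpr hS).ne'
  field_simp
  rw [Real.sq_sqrt hS.le]

theorem upper_redundancy_of_perturbed_frame_general
    {H : Type*} [NormedAddCommGroup H] [InnerProductSpace ℂ H] [FiniteDimensional ℂ H]
    (hdim : 1 ≤ Module.finrank ℂ H)
    {N : ℕ} (φ ψ : Fin N → H) (μ : ℝ)
    (hframe : ∃ A B : ℝ, 0 < A ∧ A ≤ B ∧ ∀ x : H,
      A * ‖x‖ ^ 2 ≤ ∑ i, ‖⟪x, φ i⟫‖ ^ 2 ∧ ∑ i, ‖⟪x, φ i⟫‖ ^ 2 ≤ B * ‖x‖ ^ 2)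
    (hμ : 0 < μ)
    (hpert : ∀ c : Fin N → ℂ,
      ‖∑ i, c i • (φ i - ψ i)‖ ≤ μ * Real.sqrt (∑ i, ‖c i‖ ^ 2)) :
    (⨆ x : {x : H // ‖x‖ = 1}, ∑ i, ‖⟪(x : H), ψ i⟫‖ ^ 2) ≤
      (⨆ x : {x : H // ‖x‖ = 1}, ∑ i, ‖⟪(x : H), φ i⟫‖ ^ 2) *
        (1 + μ / Real.sqrt (⨆ x : {x : H // ‖x‖ = 1}, ∑ i, ‖⟪(x : H), φ i⟫‖ ^ 2)) ^ 2 ∧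
    (⨆ x : {x : H // ‖x‖ = 1}, ∑ i, ‖⟪(x : H), φ i⟫‖ ^ 2) *
        (1 + μ / Real.sqrt (⨆ x : {x : H // ‖x‖ = 1}, ∑ i, ‖⟪(x : H), φ i⟫‖ ^ 2)) ^ 2 =
      (Real.sqrt (⨆ x : {x : H // ‖x‖ = 1}, ∑ i, ‖⟪(x : H), φ i⟫‖ ^ 2) + μ) ^ 2 := by
  obtain ⟨A, _, hA, _, hbounds⟩ := hframe
  have : Nontrivial H := Module.nontrivial_of_finrank_pos (R := ℂ) (by omega)
  have hS : 0 < upperRedundancy ℂ φ := hA.trans_le (le_upperRedundancy fun x => (hbounds x).1)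
  have heq := mul_one_add_div_sqrt_sq hS μ
  exact ⟨(upperRedundancy_le_sqrt_add_sq hμ.le hpert).trans_eq heq.symm, heq⟩

/-- If `Φ` is a unit-norm frame for a finite-dimensional complex
Hilbert space `H` (`dim H ≥ 1`) and `Ψ` is a unit-norm `μ`-perturbation of `Φ`
with `μ > 0`, then `R_Ψ⁺ ≤ R_Φ⁺ (1 + μ/√(R_Φ⁺))² = (√(R_Φ⁺) + μ)²`. -/
theorem upper_redundancy_of_perturbed_frame
    {H : Type*} [NormedAddCommGroup H] [InnerProductSpace ℂ H] [FiniteDimensional ℂ H]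
    (hdim : 1 ≤ Module.finrank ℂ H)
    {N : ℕ} (φ ψ : Fin N → H) (μ : ℝ)
    (hframe : ∃ A B : ℝ, 0 < A ∧ A ≤ B ∧ ∀ x : H,
      A * ‖x‖ ^ 2 ≤ ∑ i, ‖⟪x, φ i⟫‖ ^ 2 ∧ ∑ i, ‖⟪x, φ i⟫‖ ^ 2 ≤ B * ‖x‖ ^ 2)
    (hφ : ∀ i, ‖φ i‖ = 1) (hψ : ∀ i, ‖ψ i‖ = 1)
    (hμ : 0 < μ)
    (hpert : ∀ c : Fin N → ℂ,
      ‖∑ i, c i • (φ i - ψ i)‖ ≤ μ * Real.sqrt (∑ i, ‖c i‖ ^ 2)) :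
    (⨆ x : {x : H // ‖x‖ = 1}, ∑ i, ‖⟪(x : H), ψ i⟫‖ ^ 2) ≤
      (⨆ x : {x : H // ‖x‖ = 1}, ∑ i, ‖⟪(x : H), φ i⟫‖ ^ 2) *
        (1 + μ / Real.sqrt (⨆ x : {x : H // ‖x‖ = 1}, ∑ i, ‖⟪(x : H), φ i⟫‖ ^ 2)) ^ 2 ∧
    (⨆ x : {x : H // ‖x‖ = 1}, ∑ i, ‖⟪(x : H), φ i⟫‖ ^ 2) *
        (1 + μ / Real.sqrt (⨆ x : {x : H // ‖x‖ = 1}, ∑ i, ‖⟪(x : H), φ i⟫‖ ^ 2)) ^ 2 =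
      (Real.sqrt (⨆ x : {x : H // ‖x‖ = 1}, ∑ i, ‖⟪(x : H), φ i⟫‖ ^ 2) + μ) ^ 2 :=
  upper_redundancy_of_perturbed_frame_general hdim φ ψ μ hframe hμ hpert
end
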